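/- The limit functor from the category of pro-objects in finite sets to the category of compact, totally disconnected (profinite) topological spaces, sending a pro-object to the limit of its corresponding diagram, is an equivalence of categories. -/

import Mathlib

/-!
STATEMENT 0: The limit functor from the category `pro-𝓕` of pro-objects in finite sets to
the category `Ê` of compact, totally disconnected (profinite) topological spaces, sending a
pro-object to the limit in `Ê` of the corresponding diagram, is an equivalence of categories.

We realize the pro-category of finite sets in its standard functorial incarnation:
`Pro(𝓕) = (Lex(𝓕, Set))ᵒᵖ`, the opposite of the category of finite-limit-preserving
functors `𝓕 → Set`; these correspond exactly to cofiltered diagrams of finite sets with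
hom-sets `Hom(X, Y) = lim_t colim_s Hom(X_s, Y_t)`.  A finite set `S` yields the
pro-object `Hom(S, −)`.  The statement asserts that there is an equivalence
`Pro(𝓕) ≌ Profinite` which on the pro-objects associated to finite sets is the canonical
inclusion of finite sets into profinite spaces — i.e. the equivalence induced by sending
a pro-object of finite sets to the limit of its diagram.
-/

open CategoryTheory CategoryTheory.Limits

/-- The pro-category of finite sets, realized as the opposite of the category of
finite-limit-preserving functors `FintypeCat ⥤ Type`. -/
abbrev ProFintypeCat : Type 1 :=
  (ObjectProperty.FullSubcategory (fun F : FintypeCat.{0} ⥤ Type => Nonempty (PreservesFiniteLimits F)))ᵒᵖ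

/-- The canonical embedding of finite sets into their pro-category, sending `S` to the
pro-object `Hom(S, −)`. -/
def finToPro : FintypeCat.{0} ⥤ ProFintypeCat where
  obj S := Opposite.op ⟨coyoneda.obj (Opposite.op S), ⟨inferInstance⟩⟩
  map {S T} f :=
    (show (⟨coyoneda.obj (Opposite.op T), ⟨inferInstance⟩⟩ :
        ObjectProperty.FullSubcategory (fun F : FintypeCat.{0} ⥤ Type => Nonempty (PreservesFiniteLimits F))) ⟶
        ⟨coyoneda.obj (Opposite.op S), ⟨inferInstance⟩⟩ from ObjectProperty.homMk (coyoneda.map f.op)).op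

/-!
A profinite space `X` yields the left exact functor `C(X, −)` on finite sets, and
`X ↦ C(X, −)` is an inverse of the limit functor.

It is fully faithful because `X` is the limit of the finite sets under it
(`Profinite.asLimit'`): a natural transformation `C(Y, −) ⟶ C(X, −)` is exactly a cone
with vertex `X` over the diagram of `Y`. It is essentially surjective: a left exact `A` has a
cofiltered category of elements, and for the limit `X` of the finite sets `S` indexed by the
elements `(S, a)` of `A`, the map `a ↦ pr_(S, a) : A S → C(X, S)` is bijective. It is onto
because a continuous map from a cofiltered limit to a finite set factors through a stage, and
one-to-one because, by the Mittag-Leffler property of finite systems, the image of `X` in a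
stage is the image of a single transition map. Elements are taken over the skeleton of finite
sets so that the limit is small.
-/

universe u

namespace CategoryTheory.Functor

variable {J : Type*} [Category* J] [IsCofilteredOrEmpty J] (F : J ⥤ Type*)
  [∀ j, Finite (F.obj j)]

theorem isMittagLeffler_of_finite : F.IsMittagLeffler :=
  F.isMittagLeffler_of_exists_finite_range fun j => ⟨j, 𝟙 j, Set.finite_range _⟩

theorem exists_section_eval_eq_of_mem_eventualRange {j : J} {x : F.obj j}
    (hx : x ∈ F.eventualRange j) : ∃ s : F.sections, s.1 j = x := by
  have hML := F.isMittagLeffler_of_finite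
  have : ∀ k, Nonempty (F.toEventualRanges.obj k) := fun k => by
    obtain ⟨l, f, g, -⟩ := IsCofilteredOrEmpty.cone_objs k j
    obtain ⟨y, hy, -⟩ := hML.subset_image_eventualRange F g hx
    exact ⟨⟨F.map f y, F.eventualRange_mapsTo f hy⟩⟩
  obtain ⟨s, hs⟩ := F.toEventualRanges.eval_section_surjective_of_surjective
    (F.surjective_toEventualRanges hML) j ⟨x, hx⟩
  exact ⟨F.toEventualRangesSectionsEquiv s, congrArg Subtype.val hs⟩

theorem exists_range_map_subset_range_eval_sections (j : J) :
    ∃ (i : J) (f : i ⟶ j), Set.range (F.map f) ⊆ Set.range fun s : F.sections => s.1 j := by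
  obtain ⟨i, f, hf⟩ := F.isMittagLeffler_iff_eventualRange.1 F.isMittagLeffler_of_finite j
  exact ⟨i, f, fun x hx => F.exists_section_eval_eq_of_mem_eventualRange (hf ▸ hx)⟩

end CategoryTheory.Functor

noncomputable section

namespace Profinite

open FintypeCat Opposite

instance : PreservesFiniteLimits FintypeCat.toProfinite.{u} where
  preservesFiniteLimits J _ _ :=
    have : PreservesLimitsOfShape J (toProfinite.{u} ⋙ forget Profinite) :=
      inferInstanceAs (PreservesLimitsOfShape J (forget FintypeCat))
    have : ReflectsLimits (forget Profinite.{u}) := reflectsLimits_of_reflectsIsomorphisms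
    preservesLimitsOfShape_of_reflects_of_preserves toProfinite (forget Profinite)

abbrev restrictedCoyoneda : Profinite.{u}ᵒᵖ ⥤ FintypeCat.{u} ⥤ Type u :=
  coyoneda ⋙ (Functor.whiskeringLeft _ _ _).obj toProfinite

theorem hom_ext_of_comp_toProfinite {X Y : Profinite.{u}} {f g : X ⟶ Y}
    (h : ∀ (T : FintypeCat) (k : Y ⟶ toProfinite.obj T), f ≫ k = g ≫ k) : f = g :=
  Y.asLimit'.hom_ext fun a => h a.right a.hom

instance : restrictedCoyoneda.{u}.Faithful where
  map_injective {_ _} _ _ h := Quiver.Hom.unop_inj <|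
    hom_ext_of_comp_toProfinite fun T k => ConcreteCategory.congr_hom (congr_app h T) k

def coneOfRestrictedCoyonedaHom {X Y : Profinite.{u}}
    (β : restrictedCoyoneda.obj (op Y) ⟶ restrictedCoyoneda.obj (op X)) : Cone Y.diagram' where
  pt := X
  π.app a := β.app a.right a.hom
  π.naturality a b φ := by
    refine (Category.id_comp _).trans ?_
    rw [← StructuredArrow.w φ]
    exact ConcreteCategory.congr_hom (β.naturality φ.right) a.hom

instance : restrictedCoyoneda.{u}.Full where
  map_surjective {X Y} β := ⟨(X.unop.asLimit'.lift (coneOfRestrictedCoyonedaHom β)).op, by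
    ext T k
    exact X.unop.asLimit'.fac _ (StructuredArrow.mk k)⟩

def restrictedCoyonedaToProfiniteIso (S : FintypeCat.{u}) :
    restrictedCoyoneda.obj (op (toProfinite.obj S)) ≅ coyoneda.obj (op S) :=
  NatIso.ofComponents (fun _ => toProfiniteFullyFaithful.homEquiv.symm.toIso)
    fun _ => by ext; exact toProfinite.map_injective (by simp)

section LimitOfElements

variable {C : Type u} [SmallCategory C] (ι : C ⥤ FintypeCat.{u}) (B : C ⥤ Type u)

abbrev elementsDiagram : B.Elements ⥤ Profinite.{u} :=
  (CategoryOfElements.π B ⋙ ι) ⋙ toProfinite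

def elementsLimitComparison :
    B ⟶ ι ⋙ restrictedCoyoneda.obj (op (limit (elementsDiagram ι B))) where
  app c := TypeCat.ofHom fun y => limit.π (elementsDiagram ι B) (B.elementsMk c y)
  naturality c c' f := by
    ext y
    exact (limit.w (elementsDiagram ι B)
      (CategoryOfElements.homMk (B.elementsMk c y) (B.elementsMk c' (B.map f y)) f rfl)).symm

theorem elementsLimitComparison_surjective [IsCofiltered B.Elements] [ι.Full] (c : C) :
    Function.Surjective ((elementsLimitComparison ι B).app c) := by
  intro k
  obtain ⟨⟨d, z⟩, g, rfl⟩ := exists_hom _ (limit.isLimit (elementsDiagram ι B)) k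
  obtain ⟨m, rfl⟩ := ι.map_surjective g
  exact ⟨B.map m z, (limit.w (elementsDiagram ι B)
    (CategoryOfElements.homMk (B.elementsMk d z) (B.elementsMk c (B.map m z)) m rfl)).symm⟩

theorem elementsLimitComparison_injective [IsCofiltered B.Elements] [ι.Faithful] (c : C) :
    Function.Injective ((elementsLimitComparison ι B).app c) := by
  intro y y' h
  let F := elementsDiagram ι B ⋙ forget Profinite
  let pointsEquivSections : (forget Profinite).obj (limit (elementsDiagram ι B)) ≃ F.sections :=
    Types.isLimitEquivSections (isLimitOfPreserves (forget Profinite) (limit.isLimit _))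
  have hsec (s : F.sections) : s.1 (B.elementsMk c y) = s.1 (B.elementsMk c y') := by
    obtain ⟨x, rfl⟩ := pointsEquivSections.surjective s
    exact ConcreteCategory.congr_hom h x
  obtain ⟨j, u, v, -⟩ := IsCofilteredOrEmpty.cone_objs (B.elementsMk c y) (B.elementsMk c y')
  have (k : B.Elements) : Finite (F.obj k) := inferInstanceAs (Finite (ι.obj k.1))
  -- every value of `F.map ψ` comes from a point of the limit, where `u` and `v` agree
  obtain ⟨i, ψ, hψ⟩ := F.exists_range_map_subset_range_eval_sections j
  have hF (t : F.obj i) : F.map (ψ ≫ u) t = F.map (ψ ≫ v) t := by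
    obtain ⟨s, hs⟩ := hψ ⟨t, rfl⟩
    rw [Functor.map_comp_apply, Functor.map_comp_apply, ← hs, s.2 u, s.2 v, hsec s]
  have hψuv : (ψ ≫ u).1 = (ψ ≫ v).1 :=
    (ι ⋙ toProfinite ⋙ forget Profinite).map_injective (by ext t; exact hF t)
  calc y = B.map (ψ ≫ u).1 i.2 := (ψ ≫ u).2.symm
    _ = B.map (ψ ≫ v).1 i.2 := by rw [hψuv]
    _ = y' := (ψ ≫ v).2

def elementsLimitIso [IsCofiltered B.Elements] [ι.Full] [ι.Faithful] :
    B ≅ ι ⋙ restrictedCoyoneda.obj (op (limit (elementsDiagram ι B))) :=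
  have (c : C) : IsIso ((elementsLimitComparison ι B).app c) := (isIso_iff_bijective _).2
    ⟨elementsLimitComparison_injective ι B c, elementsLimitComparison_surjective ι B c⟩
  have : IsIso (elementsLimitComparison ι B) := NatIso.isIso_of_isIso_app _
  asIso (elementsLimitComparison ι B)

end LimitOfElements

theorem exists_iso_restrictedCoyoneda (A : FintypeCat.{u} ⥤ Type u) [IsCofiltered A.Elements] :
    ∃ X : Profinite.{u}, Nonempty (A ≅ restrictedCoyoneda.obj (op X)) :=
  ⟨_, ⟨((Functor.whiskeringLeft _ _ _).obj Skeleton.incl).preimageIso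
    (elementsLimitIso Skeleton.incl (Skeleton.incl ⋙ A))⟩⟩

end Profinite

open Opposite Profinite

abbrev profiniteToProFintype : Profinite.{0} ⥤ ProFintypeCat :=
  (ObjectProperty.lift _ restrictedCoyoneda
    fun _ => ⟨comp_preservesFiniteLimits _ _⟩).rightOp

instance : profiniteToProFintype.EssSurj where
  mem_essImage P := by
    have : PreservesFiniteLimits P.unop.obj := P.unop.property.some
    have := P.unop.obj.isCofiltered_elements
    obtain ⟨X, ⟨e⟩⟩ := exists_iso_restrictedCoyoneda P.unop.obj
    exact ⟨X, ⟨(ObjectProperty.isoMk _ e).op⟩⟩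

instance : profiniteToProFintype.IsEquivalence where

def finToProIso : finToPro ≅ FintypeCat.toProfinite ⋙ profiniteToProFintype :=
  NatIso.ofComponents (fun S => (ObjectProperty.isoMk _ (restrictedCoyonedaToProfiniteIso S)).op)
    fun f => by
      apply Quiver.Hom.unop_inj
      ext T k
      exact FintypeCat.toProfinite.map_injective
        (by simp [finToPro, restrictedCoyonedaToProfiniteIso])

end

theorem proFintype_equiv_profinite :
    ∃ e : ProFintypeCat ≌ Profinite.{0},
      Nonempty (finToPro ⋙ e.functor ≅ FintypeCat.toProfinite) :=
  ⟨profiniteToProFintype.asEquivalence.symm, ⟨finToProIso.compInverseIso⟩⟩
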